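/- arXiv:2406.13670 — 2 statements merged into one kernel-verified Lean document; each statement's English description precedes it below -/
import Mathlib

section
/- Let Δ be a simplicial forest and let M = {F₁, …, F_r} and N = {G₁, …, G_r} be two r-matchings of Δ such that F₁ ∪ ⋯ ∪ F_r = G₁ ∪ ⋯ ∪ G_r. Then M = N. -/
noncomputable section

open Finset MvPolynomial

/-- A simplicial complex on the vertex type `V`: a finite, nonempty collection of
finite subsets of `V` that is closed under taking subsets. -/
structure SimplicialComplex (V : Type) [DecidableEq V] : Type where
  faces : Finset (Finset V)
  nonempty' : faces.Nonempty
  down_closed : ∀ ⦃F G : Finset V⦄, F ∈ faces → G ⊆ F → G ∈ faces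

namespace SimplicialComplex

variable {V : Type} [DecidableEq V]

open scoped Classical in
/-- The facets: the maximal faces with respect to inclusion. -/
def facets (Δ : SimplicialComplex V) : Finset (Finset V) :=
  Δ.faces.filter fun F => ∀ G ∈ Δ.faces, F ⊆ G → F = G

/-- A matching: a set of pairwise disjoint facets. -/
def IsMatching (Δ : SimplicialComplex V) (M : Finset (Finset V)) : Prop :=
  M ⊆ Δ.facets ∧ ∀ F ∈ M, ∀ G ∈ M, F ≠ G → F ∩ G = ∅

/-- The matching number `ν(Δ)`: the maximum cardinality of a matching. -/
def matchingNumber (Δ : SimplicialComplex V) : ℕ :=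
  sSup {r : ℕ | ∃ M : Finset (Finset V), Δ.IsMatching M ∧ M.card = r}

/-- `F` is a leaf of the subcomplex generated by the facet set `S`: either `F` is
the only facet, or there is another facet `G` with `H ∩ F ⊆ G ∩ F` for all
facets `H ≠ F`. -/
def IsLeafIn (S : Finset (Finset V)) (F : Finset V) : Prop :=
  F ∈ S ∧ (S = {F} ∨ ∃ G ∈ S, G ≠ F ∧ ∀ H ∈ S, H ≠ F → H ∩ F ⊆ G ∩ F)

/-- A simplicial forest: every nonempty subcomplex has a leaf (equivalently,
every connected component is a simplicial tree). -/
def IsForest (Δ : SimplicialComplex V) : Prop :=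
  ∀ S ⊆ Δ.facets, S.Nonempty → ∃ F, IsLeafIn S F

/-- Connectedness: any two facets are joined by a chain of facets in which
consecutive facets intersect nontrivially. -/
def Connected (Δ : SimplicialComplex V) : Prop :=
  ∀ F ∈ Δ.facets, ∀ G ∈ Δ.facets,
    Relation.ReflTransGen
      (fun A B => A ∈ Δ.facets ∧ B ∈ Δ.facets ∧ (A ∩ B).Nonempty) F G

/-- A simplicial tree: a connected simplicial forest. -/
def IsTree (Δ : SimplicialComplex V) : Prop := Δ.Connected ∧ Δ.IsForest

/-- A good leaf: a facet which is a leaf of every subcomplex containing it. -/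
def IsGoodLeaf (Δ : SimplicialComplex V) (F : Finset V) : Prop :=
  F ∈ Δ.facets ∧ ∀ S ⊆ Δ.facets, F ∈ S → IsLeafIn S F

/-- Two disjoint facets `F`, `G` form a gap: the induced subcomplex on `F ∪ G`
has facet set exactly `{F, G}`. -/
def FormGap (Δ : SimplicialComplex V) (F G : Finset V) : Prop :=
  F ∈ Δ.facets ∧ G ∈ Δ.facets ∧ F ∩ G = ∅ ∧
    ∀ H ∈ Δ.facets, H ⊆ F ∪ G → H = F ∨ H = G

/-- A restricted matching: a matching one of whose facets forms a gap with every
other facet of the matching. -/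
def IsRestrictedMatching (Δ : SimplicialComplex V) (M : Finset (Finset V)) : Prop :=
  Δ.IsMatching M ∧ ∃ F ∈ M, ∀ G ∈ M, G ≠ F → Δ.FormGap F G

/-- The restricted matching number `ν₀(Δ)`. -/
def restrictedMatchingNumber (Δ : SimplicialComplex V) : ℕ :=
  sSup {r : ℕ | ∃ M : Finset (Finset V), Δ.IsRestrictedMatching M ∧ M.card = r}

/-- An induced matching: a matching `M` such that the facets contained in the
union of the members of `M` are exactly the members of `M`. -/
def IsInducedMatching (Δ : SimplicialComplex V) (M : Finset (Finset V)) : Prop :=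
  Δ.IsMatching M ∧ ∀ H ∈ Δ.facets, H ⊆ M.biUnion id → H ∈ M

/-- The induced matching number `ν₁(Δ)`. -/
def inducedMatchingNumber (Δ : SimplicialComplex V) : ℕ :=
  sSup {r : ℕ | ∃ M : Finset (Finset V), Δ.IsInducedMatching M ∧ M.card = r}

/-- A proper chain of length `n` between the facets `F` and `G`. -/
def ProperChain (Δ : SimplicialComplex V) (F G : Finset V) (n : ℕ) : Prop :=
  ∃ c : ℕ → Finset V, c 0 = F ∧ c n = G ∧ (∀ i ≤ n, c i ∈ Δ.facets) ∧
    ∀ i < n, (c i ∩ c (i + 1)).card = (c (i + 1)).card - 1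

/-- The distance between two facets: the minimal length of a proper chain. -/
def dist (Δ : SimplicialComplex V) (F G : Finset V) : ℕ :=
  sInf {n : ℕ | Δ.ProperChain F G n}

/-- The intersection property for a pure complex whose facets have cardinality
`t` (`= d + 1`): it is connected in codimension 1, and any two facets `F`, `G`
with `|F ∩ G| = t - k` (`1 ≤ k ≤ t`) satisfy `dist(F, G) = k`. -/
def HasIntersectionProperty (Δ : SimplicialComplex V) (t : ℕ) : Prop :=
  (∀ F ∈ Δ.facets, F.card = t) ∧
    (∀ F ∈ Δ.facets, ∀ G ∈ Δ.facets, ∃ n, Δ.ProperChain F G n) ∧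
    ∀ F ∈ Δ.facets, ∀ G ∈ Δ.facets, ∀ k, 1 ≤ k → k ≤ t →
      (F ∩ G).card = t - k → Δ.dist F G = k

end SimplicialComplex

/-- The simplicial complex generated by a finite family of faces. -/
def ofFacets {V : Type} [DecidableEq V] (ℱ : Finset (Finset V)) :
    SimplicialComplex V where
  faces := insert ∅ (ℱ.biUnion Finset.powerset)
  nonempty' := ⟨∅, Finset.mem_insert_self _ _⟩
  down_closed := by
    intro F G hF hGF
    rcases Finset.mem_insert.mp hF with h | h
    · subst h
      exact Finset.mem_insert.mpr <| Or.inl (Finset.subset_empty.mp hGF)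
    · rcases Finset.mem_biUnion.mp h with ⟨A, hA, hFA⟩
      exact Finset.mem_insert.mpr <| Or.inr <| Finset.mem_biUnion.mpr
        ⟨A, hA, Finset.mem_powerset.mpr (hGF.trans (Finset.mem_powerset.mp hFA))⟩

/-- The ideal of `K[x_v : v ∈ V]` generated by the products
`x_{F₁} ⋯ x_{F_k}` over all `k`-matchings `{F₁, …, F_k}` taken from the facet
set `ℱ`.  For `ℱ = ℱ(Δ)` this is the `k`-th squarefree power `I(Δ)^{[k]}` of the
facet ideal `I(Δ)` (and the facet ideal itself for `k = 1`). -/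
def matchPow (K : Type) [Field K] {V : Type} [DecidableEq V]
    (ℱ : Finset (Finset V)) (k : ℕ) : Ideal (MvPolynomial V K) :=
  Ideal.span {p | ∃ M : Finset (Finset V), M ⊆ ℱ ∧
    (∀ F ∈ M, ∀ G ∈ M, F ≠ G → F ∩ G = ∅) ∧ M.card = k ∧
    p = ∏ F ∈ M, ∏ v ∈ F, (X v : MvPolynomial V K)}

/-- The `k`-th squarefree power `I(Δ)^{[k]}` of the facet ideal of `Δ`. -/
def sqfreePower (K : Type) [Field K] {V : Type} [DecidableEq V]
    (Δ : SimplicialComplex V) (k : ℕ) : Ideal (MvPolynomial V K) :=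
  matchPow K Δ.facets k

/-- `p` is a monomial with coefficient `1`. -/
def IsMonomialOne {K : Type} [Field K] {V : Type} (p : MvPolynomial V K) : Prop :=
  ∃ d : V →₀ ℕ, p = monomial d 1

/-- `u` is a minimal monomial generator of the monomial ideal `I`: `u` is a
monomial of `I` which is not strictly divisible by any monomial of `I`. -/
def IsMinGen {K : Type} [Field K] {V : Type} (I : Ideal (MvPolynomial V K))
    (u : MvPolynomial V K) : Prop :=
  IsMonomialOne u ∧ u ∈ I ∧
    ∀ v : MvPolynomial V K, IsMonomialOne v → v ∈ I → v ∣ u → v = u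

/-- A monomial ideal `I` has linear quotients: its minimal monomial generators
can be listed as `f₁, …, f_m` so that each colon ideal
`(f₁, …, f_{i-1}) : (f_i)` is generated by a subset of the variables. -/
def HasLinearQuotients {K : Type} [Field K] {V : Type}
    (I : Ideal (MvPolynomial V K)) : Prop :=
  ∃ L : List (MvPolynomial V K), L.Nodup ∧ (∀ u, u ∈ L ↔ IsMinGen I u) ∧
    ∀ i : ℕ, ∀ hi : i < L.length, 1 ≤ i →
      ∃ s : Set V,
        Submodule.colon (Ideal.span {q | q ∈ L.take i}) (Ideal.span {L.get ⟨i, hi⟩}) =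
          Ideal.span ((fun v => (X v : MvPolynomial V K)) '' s)

/-- The degree of the monomial with exponent vector `d`. -/
def degOf {V : Type} (d : V →₀ ℕ) : ℕ := d.sum fun _ n => n

/-- The edge relation of the induced graph `G_I^{(u,v)}` of Bigdeli–Herzog–Zheng,
for a monomial ideal `I` generated in degree `d`, where `m` is the exponent
vector of `lcm(u, v)`: two minimal monomial generators (identified with their
exponent vectors) dividing `lcm(u, v)` are adjacent when their lcm has degree
`d + 1`. -/
def EdgeRel (K : Type) [Field K] {V : Type} [DecidableEq V]
    (I : Ideal (MvPolynomial V K)) (d : ℕ) (m : V →₀ ℕ) (u v : V →₀ ℕ) : Prop :=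
  IsMinGen I (monomial u (1 : K)) ∧ IsMinGen I (monomial v (1 : K)) ∧
    u ≤ m ∧ v ≤ m ∧ degOf (u ⊔ v) = d + 1

/-- The combinatorial criterion of Bigdeli–Herzog–Zheng for a monomial ideal `I`
generated in degree `d` to be linearly related: any two minimal monomial
generators `u`, `v` are connected by a path in `G_I^{(u,v)}`. -/
def LinearlyRelatedVia (K : Type) [Field K] {V : Type} [DecidableEq V]
    (I : Ideal (MvPolynomial V K)) (d : ℕ) : Prop :=
  ∀ a b : V →₀ ℕ, IsMinGen I (monomial a (1 : K)) → IsMinGen I (monomial b (1 : K)) →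
    Relation.ReflTransGen (EdgeRel K I d (a ⊔ b)) a b

/-- The `t`-path simplicial tree `Γ_{n,t}` of the path graph `P_n` on the
vertices `1, …, n`: its facets are the intervals `F_i = {i, …, i + t - 1}` for
`1 ≤ i ≤ n - t + 1`. -/
def pathFacets (n t : ℕ) : Finset (Finset ℕ) :=
  (Finset.Icc 1 (n - t + 1)).image fun i => Finset.Icc i (i + t - 1)

/-- The `t`-path simplicial tree `Γ_{n,t}` of the path graph `P_n`. -/
def pathComplex (n t : ℕ) : SimplicialComplex ℕ := ofFacets (pathFacets n t)

/-!
A leaf `F` of the subcomplex with facet set `M ∪ N` lies in one of the matchings, so it is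
covered by the facets of the other one; those meet `F` only inside a single facet `G ≠ F`, so
`F` would be contained in `G` unless it belongs to both matchings. Removing `F` from both
matchings keeps their unions equal, and induction on `r` concludes.
-/

namespace SimplicialComplex

variable {V : Type} [DecidableEq V] {Δ : SimplicialComplex V}

theorem eq_of_subset_of_mem_facets {F G : Finset V} (hF : F ∈ Δ.facets) (hG : G ∈ Δ.facets)
    (h : F ⊆ G) : F = G := by
  simp only [facets, mem_filter] at hF hG
  exact hF.2 G hG.1 h

theorem IsMatching.mono {M M' : Finset (Finset V)} (hM : Δ.IsMatching M) (h : M' ⊆ M) :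
    Δ.IsMatching M' :=
  ⟨h.trans hM.1, fun A hA B hB => hM.2 A (h hA) B (h hB)⟩

theorem IsMatching.biUnion_erase {M : Finset (Finset V)} (hM : Δ.IsMatching M) {F : Finset V}
    (hF : F ∈ M) : (M.erase F).biUnion id = M.biUnion id \ F := by
  ext v
  simp only [mem_biUnion, mem_erase, mem_sdiff, id]
  constructor
  · rintro ⟨H, ⟨hHF, hHM⟩, hvH⟩
    refine ⟨⟨H, hHM, hvH⟩, fun hvF => ?_⟩
    simpa [hM.2 H hHM F hF hHF] using mem_inter.mpr ⟨hvH, hvF⟩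
  · rintro ⟨⟨H, hHM, hvH⟩, hvF⟩
    exact ⟨H, ⟨fun h => hvF (h ▸ hvH), hHM⟩, hvH⟩

theorem mem_of_subset_biUnion_of_inter_subset {N : Finset (Finset V)} {F G : Finset V}
    (hF : F ∈ Δ.facets) (hG : G ∈ Δ.facets) (hGF : G ≠ F) (hFN : F ⊆ N.biUnion id)
    (hcov : ∀ H ∈ N, H ≠ F → H ∩ F ⊆ G ∩ F) : F ∈ N := by
  by_contra hFN'
  have hFG : F ⊆ G := fun v hv => by
    obtain ⟨H, hHN, hvH⟩ := mem_biUnion.mp (hFN hv)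
    exact (mem_inter.mp
      (hcov H hHN (ne_of_mem_of_not_mem hHN hFN') (mem_inter.mpr ⟨hvH, hv⟩))).1
  exact hGF (eq_of_subset_of_mem_facets hF hG hFG).symm

theorem IsForest.exists_mem_inter_of_biUnion_eq (hΔ : Δ.IsForest) {M N : Finset (Finset V)}
    (hM : M ⊆ Δ.facets) (hN : N ⊆ Δ.facets) (hMne : M.Nonempty) (hNne : N.Nonempty)
    (hU : M.biUnion id = N.biUnion id) : ∃ F ∈ M, F ∈ N := by
  have hMN : M ∪ N ⊆ Δ.facets := union_subset hM hN
  obtain ⟨F, hFMN, hsingle | ⟨G, hGMN, hGF, hcov⟩⟩ :=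
    hΔ (M ∪ N) hMN (hMne.mono subset_union_left)
  · have hMF : M = {F} := hMne.subset_singleton_iff.mp (hsingle ▸ subset_union_left)
    have hNF : N = {F} := hNne.subset_singleton_iff.mp (hsingle ▸ subset_union_right)
    exact ⟨F, hMF ▸ mem_singleton_self F, hNF ▸ mem_singleton_self F⟩
  · have hF := hMN hFMN
    have hG := hMN hGMN
    refine ⟨F, ?_⟩
    rcases mem_union.mp hFMN with hFM | hFN
    · refine ⟨hFM, mem_of_subset_biUnion_of_inter_subset hF hG hGF ?_
        fun H hH => hcov H (mem_union_right M hH)⟩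
      exact hU ▸ subset_biUnion_of_mem id hFM
    · refine ⟨mem_of_subset_biUnion_of_inter_subset hF hG hGF ?_
        fun H hH => hcov H (mem_union_left N hH), hFN⟩
      exact hU ▸ subset_biUnion_of_mem id hFN

end SimplicialComplex

/-- Two matchings of the same size in a simplicial forest with
the same union of facets coincide. -/
theorem matchings_with_equal_union_eq
    {V : Type} [DecidableEq V] (Δ : SimplicialComplex V) (hΔ : Δ.IsForest)
    (r : ℕ) (M N : Finset (Finset V))
    (hM : Δ.IsMatching M) (hN : Δ.IsMatching N)
    (hMr : M.card = r) (hNr : N.card = r)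
    (hU : M.biUnion id = N.biUnion id) :
    M = N := by
  induction r generalizing M N with
  | zero => rw [card_eq_zero.mp hMr, card_eq_zero.mp hNr]
  | succ r ih =>
    obtain ⟨F, hFM, hFN⟩ := hΔ.exists_mem_inter_of_biUnion_eq hM.1 hN.1
      (card_pos.mp (by omega)) (card_pos.mp (by omega)) hU
    have hrest : M.erase F = N.erase F :=
      ih _ _ (hM.mono (erase_subset F M)) (hN.mono (erase_subset F N))
        (by rw [card_erase_of_mem hFM, hMr, Nat.add_sub_cancel])
        (by rw [card_erase_of_mem hFN, hNr, Nat.add_sub_cancel])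
        (by rw [hM.biUnion_erase hFM, hN.biUnion_erase hFN, hU])
    rw [← insert_erase hFM, hrest, insert_erase hFN]

end
end

section
/- Let t ≥ 2, let Γ be a broom graph containing a directed path on t vertices, and let Γ_t be its t-path simplicial tree. Then I(Γ_t)^{[ν(Γ_t)]} has linear quotients. -/
noncomputable section

open Finset MvPolynomial

/-- The vertex type for broom graphs: `Sum.inl i` is the `i`-th handle vertex
(`0 ≤ i ≤ h`), and `Sum.inr (j, a)` is the `a`-th leaf attached at the handle
vertex `j`. -/
abbrev BroomVertex : Type := ℕ ⊕ (ℕ × ℕ)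

/-- The directed `t`-paths of the broom graph of height `h` with `ℓ j` leaves
attached at the handle vertex `j` (for `j < h`, i.e. at handle vertices other
than the last one; the handle vertices are `0, …, h`).  A directed `t`-path
either consists of `t` consecutive handle vertices, or of `t - 1` consecutive
handle vertices followed by a leaf attached at the last of them.  These are the
facets of the `t`-path simplicial tree `Γ_t` of the broom graph. -/
def broomFacets (h t : ℕ) (ℓ : ℕ → ℕ) : Finset (Finset BroomVertex) :=
  ((Finset.range (h + 2 - t)).image fun i =>
      (Finset.Icc i (i + t - 1)).image Sum.inl) ∪
    (Finset.range h).biUnion fun j =>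
      if t - 2 ≤ j then
        (Finset.range (ℓ j)).image fun a =>
          insert (Sum.inr (j, a)) ((Finset.Icc (j - (t - 2)) j).image Sum.inl)
      else ∅

/-!
Order the generators `x_U` of `I(Γ_t)^{[ν]}`, where `U` runs over the vertex sets of maximum
matchings, lexicographically for the variable order: handle vertex `j`, then the leaves at `j`,
then handle vertex `j + 1`. For squarefree monomials of one degree, linear quotients follow from
an exchange property: if `U'` precedes `U` and `p ∈ U' \ U` is their first difference, some
`x ∈ U` can be traded for an earlier `y ∈ U' \ U` without leaving the generators; the colon
ideals are then generated by such variables `x_y`.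

For the broom, with `U = ⋃ M` and `U' = ⋃ M'`, the exchange is found by cases on `p`, counting
vertices before `p` modulo `t`: a facet avoiding a handle vertex lies entirely before or after it.
* `p` is the handle vertex `q`: the count shows that the facet of `M'` through `q` starts at `q`.
  The first vertex of `⋃ M` after `q` (there is one by maximality of `M`) starts a facet of `M`,
  which can be shifted down by one vertex.
* `p` is the leaf `(j, a)`: either `M` uses a later leaf at `j`, which is swapped for `a`, or the
  count shows that the facet of `M` through `j` is the handle facet ending at `j + 1`; trading
  `j + 1` for `(j, a)` turns it into a leaf facet.
-/

section MonomialIdeals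

variable {V : Type}

def sqfreeExp (U : Finset V) : V →₀ ℕ := ∑ v ∈ U, Finsupp.single v 1

lemma sqfreeExp_apply [DecidableEq V] (U : Finset V) (v : V) :
    sqfreeExp U v = if v ∈ U then 1 else 0 := by
  simp [sqfreeExp, Finsupp.finsetSum_apply, Finsupp.single_apply]

lemma sqfreeExp_singleton (v : V) : sqfreeExp {v} = Finsupp.single v 1 := by
  simp [sqfreeExp]

lemma sqfreeExp_le_sqfreeExp {A B : Finset V} : sqfreeExp A ≤ sqfreeExp B ↔ A ⊆ B := by
  classical
  simp only [Finsupp.le_def, sqfreeExp_apply, Finset.subset_iff]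
  exact forall_congr' fun v => by split_ifs <;> simp_all

lemma sqfreeExp_injective : Function.Injective (sqfreeExp : Finset V → V →₀ ℕ) :=
  fun _ _ h => (sqfreeExp_le_sqfreeExp.1 h.le).antisymm (sqfreeExp_le_sqfreeExp.1 h.ge)

lemma sqfreeExp_sub [DecidableEq V] (A B : Finset V) :
    sqfreeExp A - sqfreeExp B = sqfreeExp (A \ B) := by
  ext v
  simp only [Finsupp.tsub_apply, sqfreeExp_apply, Finset.mem_sdiff]
  split_ifs <;> simp_all

variable {R : Type} [CommSemiring R]

lemma prod_X_eq_monomial_sqfreeExp (U : Finset V) :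
    ∏ v ∈ U, (X v : MvPolynomial V R) = monomial (sqfreeExp U) 1 := by
  simp only [sqfreeExp, monomial_sum_one, X]

lemma colon_span_monomial_image (A : Set (V →₀ ℕ)) (b : V →₀ ℕ) :
    Submodule.colon (Ideal.span ((fun d => monomial d (1 : R)) '' A))
        (Ideal.span {monomial b (1 : R)}) =
      Ideal.span ((fun d => monomial d (1 : R)) '' ((· - b) '' A)) := by
  ext r
  rw [Ideal.mem_colon_span_singleton, mem_ideal_span_monomial_image,
    mem_ideal_span_monomial_image]
  constructor
  · intro hr e he
    have hmem : e + b ∈ (r * monomial b (1 : R)).support := by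
      rwa [mem_support_iff, coeff_mul_monomial, mul_one, ← mem_support_iff]
    obtain ⟨a, ha, hab⟩ := hr _ hmem
    exact ⟨a - b, Set.mem_image_of_mem _ ha, tsub_le_iff_right.2 hab⟩
  · intro hr e he
    rw [mem_support_iff, coeff_mul_monomial', mul_one] at he
    split_ifs at he with hbe
    · obtain ⟨_, ⟨a, ha, rfl⟩, hab⟩ := hr _ (mem_support_iff.2 he)
      exact ⟨a, ha, (tsub_le_iff_right.1 hab).trans_eq (tsub_add_cancel_of_le hbe)⟩
    · exact absurd rfl he

lemma span_monomial_sqfreeExp_eq_span_X (T : Set (Finset V)) (hT : ∀ W ∈ T, ∃ v ∈ W, {v} ∈ T) :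
    Ideal.span ((fun W => monomial (sqfreeExp W) (1 : R)) '' T) =
      Ideal.span (X '' {v | {v} ∈ T}) := by
  apply le_antisymm <;> rw [Ideal.span_le]
  · rintro _ ⟨W, hW, rfl⟩
    obtain ⟨v, hvW, hv⟩ := hT W hW
    have hdvd : (X v : MvPolynomial V R) ∣ monomial (sqfreeExp W) 1 := by
      rw [← prod_X_eq_monomial_sqfreeExp]
      exact Finset.dvd_prod_of_mem _ hvW
    exact Ideal.mem_of_dvd _ hdvd (Ideal.subset_span ⟨v, hv, rfl⟩)
  · rintro _ ⟨v, hv, rfl⟩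
    refine Ideal.subset_span ⟨{v}, hv, ?_⟩
    simp only [sqfreeExp_singleton, X]

lemma monomial_mem_span_monomial_sqfreeExp_iff [Nontrivial R] {E : Set (Finset V)}
    {c : V →₀ ℕ} :
    monomial c (1 : R) ∈ Ideal.span ((fun U => monomial (sqfreeExp U) (1 : R)) '' E) ↔
      ∃ U ∈ E, sqfreeExp U ≤ c := by
  classical
  rw [← Set.image_image (fun d => monomial d (1 : R)), mem_ideal_span_monomial_image,
    support_monomial, if_neg one_ne_zero]
  simp

lemma isMinGen_span_monomial_sqfreeExp_iff {K : Type} [Field K] {E : Set (Finset V)}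
    (hE : IsAntichain (· ⊆ ·) E) {u : MvPolynomial V K} :
    IsMinGen (Ideal.span ((fun U => monomial (sqfreeExp U) (1 : K)) '' E)) u ↔
      ∃ U ∈ E, u = monomial (sqfreeExp U) 1 := by
  constructor
  · rintro ⟨⟨d, rfl⟩, hu, hmin⟩
    obtain ⟨U, hU, hUd⟩ := monomial_mem_span_monomial_sqfreeExp_iff.1 hu
    refine ⟨U, hU, (hmin _ ⟨_, rfl⟩ (Ideal.subset_span ⟨U, hU, rfl⟩) ?_).symm⟩
    exact monomial_dvd_monomial.2 ⟨Or.inr hUd, dvd_rfl⟩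
  · rintro ⟨U, hU, rfl⟩
    refine ⟨⟨_, rfl⟩, Ideal.subset_span ⟨U, hU, rfl⟩, ?_⟩
    rintro _ ⟨c, rfl⟩ hc hdvd
    obtain ⟨U', hU', hU'c⟩ := monomial_mem_span_monomial_sqfreeExp_iff.1 hc
    have hcU : c ≤ sqfreeExp U := (monomial_dvd_monomial.1 hdvd).1.resolve_left one_ne_zero
    have hU'U : U' = U := hE.eq hU' hU (sqfreeExp_le_sqfreeExp.1 (hU'c.trans hcU))
    rw [le_antisymm hcU (hU'U ▸ hU'c)]

end MonomialIdeals

lemma List.mem_take_iff_of_pairwise_gt {α β : Type*} [LinearOrder β] {f : α → β} {L : List α}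
    (hL : L.Pairwise (fun a b => f b < f a)) {i : ℕ} (hi : i < L.length) {a : α} :
    a ∈ L.take i ↔ a ∈ L ∧ f L[i] < f a := by
  rw [List.pairwise_iff_getElem] at hL
  constructor
  · intro ha
    obtain ⟨j, hj, rfl⟩ := List.mem_take_iff_getElem.1 ha
    exact ⟨List.getElem_mem _, hL j i _ hi (lt_of_lt_of_le hj (min_le_left _ _))⟩
  · rintro ⟨ha, hlt⟩
    obtain ⟨j, hj, rfl⟩ := List.mem_iff_getElem.1 ha
    refine List.mem_take_iff_getElem.2 ⟨j, lt_min ?_ hj, rfl⟩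
    by_contra! hij
    rcases hij.lt_or_eq with hij | rfl
    · exact (hL i j hi hj hij).not_gt hlt
    · exact hlt.false

section LinearQuotients

variable {V : Type} [DecidableEq V] {K : Type} [Field K]

theorem hasLinearQuotients_of_exchange {β : Type*} [LinearOrder β] (f : Finset V → β)
    (hf : Function.Injective f) {E : Set (Finset V)} (hfin : E.Finite)
    (hanti : IsAntichain (· ⊆ ·) E)
    (hex : ∀ U ∈ E, ∀ U' ∈ E, f U < f U' → ∃ W ∈ E, f U < f W ∧ ∃ y ∈ U', W \ U = {y}) :
    HasLinearQuotients (Ideal.span ((fun U => monomial (sqfreeExp U) (1 : K)) '' E)) := by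
  let r : Finset V → Finset V → Prop := fun A B => f B ≤ f A
  have : IsTrans _ r := ⟨fun _ _ _ h₁ h₂ => h₂.trans h₁⟩
  have : Std.Antisymm r := ⟨fun _ _ h₁ h₂ => hf (le_antisymm h₂ h₁)⟩
  have : Std.Total r := ⟨fun A B => le_total (f B) (f A)⟩
  set L := hfin.toFinset.sort r
  have hmem : ∀ U, U ∈ L ↔ U ∈ E := by simp [L]
  have hnodup : L.Nodup := hfin.toFinset.sort_nodup r
  have hsorted : L.Pairwise (fun A B => f B < f A) :=
    ((hfin.toFinset.pairwise_sort r).and hnodup).imp fun h => h.1.lt_of_ne (hf.ne h.2).symm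
  set g : Finset V → MvPolynomial V K := fun U => monomial (sqfreeExp U) 1
  have hg : Function.Injective g :=
    fun _ _ h => sqfreeExp_injective (monomial_left_injective one_ne_zero h)
  refine ⟨L.map g, hnodup.map hg, fun u => ?_, fun i hi _ => ?_⟩
  · simp only [List.mem_map, hmem, isMinGen_span_monomial_sqfreeExp_iff hanti, eq_comm, g]
  have hi' : i < L.length := by simpa using hi
  set U := L[i]
  have hUE : U ∈ E := (hmem U).1 (List.getElem_mem _)
  set T := (· \ U) '' {W | W ∈ L.take i}
  have htake : {q | q ∈ (L.map g).take i} =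
      (fun d => monomial d (1 : K)) '' (sqfreeExp '' {W | W ∈ L.take i}) := by
    ext q
    simp [← List.map_take, g]
  have hget : (L.map g).get ⟨i, hi⟩ = monomial (sqfreeExp U) 1 := by simp [g, U]
  -- The colon ideal is spanned by the `x_{W \ U}`, `W` before `U`; by the exchange property each
  -- of them is divisible by some `x_y` with `{y} = W₀ \ U`, `W₀` before `U`.
  refine ⟨{v | {v} ∈ T}, ?_⟩
  rw [htake, hget, colon_span_monomial_image, Set.image_image, Set.image_image]
  simp_rw [sqfreeExp_sub]
  rw [← Set.image_image (fun W => monomial (sqfreeExp W) (1 : K)) (· \ U)]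
  refine span_monomial_sqfreeExp_eq_span_X T ?_
  rintro _ ⟨W, hW, rfl⟩
  obtain ⟨hWL, hUW⟩ := (List.mem_take_iff_of_pairwise_gt hsorted hi').1 hW
  obtain ⟨W₀, hW₀E, hUW₀, y, hyW, hW₀U⟩ := hex U hUE W ((hmem W).1 hWL) hUW
  have hyU : y ∉ U := (Finset.mem_sdiff.1 (hW₀U ▸ Finset.mem_singleton_self y)).2
  refine ⟨y, Finset.mem_sdiff.2 ⟨hyW, hyU⟩, W₀, ?_, hW₀U⟩
  exact (List.mem_take_iff_of_pairwise_gt hsorted hi').2 ⟨(hmem W₀).2 hW₀E, hUW₀⟩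

end LinearQuotients

section LexOrder

open OrderDual

variable {V : Type} {κ : Type*} [LinearOrder κ] {k : V → κ}

/-- `lexKey k U < lexKey k U'` iff the `k`-smallest vertex of `U ∆ U'` lies in `U'`: the
lexicographic order of the monomials `x_U`, realised as colex for the reversed order on `κ`. -/
def lexKey (k : V → κ) (U : Finset V) : Colex (Finset κᵒᵈ) := toColex (U.image (toDual ∘ k))

def LexExchange [DecidableEq V] (k : V → κ) (E : Set (Finset V)) (U U' : Finset V) : Prop :=
  ∃ x ∈ U, ∃ y ∈ U', y ∉ U ∧ k y < k x ∧ insert y (U.erase x) ∈ E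

lemma lexKey_injective (hk : Function.Injective k) : Function.Injective (lexKey k) :=
  toColex.injective.comp (Finset.image_injective (toDual.injective.comp hk))

lemma exists_first_diff_of_lexKey_lt [DecidableEq V] (hk : Function.Injective k) {U U' : Finset V}
    (h : lexKey k U < lexKey k U') :
    ∃ p ∈ U', p ∉ U ∧ ∀ w, k w < k p → (w ∈ U ↔ w ∈ U') := by
  simp only [lexKey, Finset.Colex.toColex_lt_toColex_iff_exists_forall_lt, Finset.mem_image,
    Function.comp_apply] at h
  obtain ⟨_, ⟨p₀, hp₀U', rfl⟩, hp₀U, hlt⟩ := h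
  have hp₀ : p₀ ∈ U' \ U := Finset.mem_sdiff.2 ⟨hp₀U', fun h => hp₀U ⟨p₀, h, rfl⟩⟩
  obtain ⟨p, hp, hpmin⟩ := Finset.exists_min_image (U' \ U) k ⟨p₀, hp₀⟩
  obtain ⟨hpU', hpU⟩ := Finset.mem_sdiff.1 hp
  refine ⟨p, hpU', hpU, fun w hw => ⟨fun hwU => ?_, fun hwU' => ?_⟩⟩
  · by_contra hwU'
    have := hlt _ ⟨w, hwU, rfl⟩ fun ⟨w', hw', hww'⟩ => hwU' (hk (toDual.injective hww') ▸ hw')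
    exact (hw.trans_le (hpmin p₀ hp₀)).not_gt (toDual_lt_toDual.1 this)
  · by_contra hwU
    exact hw.not_ge (hpmin w (Finset.mem_sdiff.2 ⟨hwU', hwU⟩))

lemma lexKey_lt_insert_erase [DecidableEq V] (hk : Function.Injective k) {U : Finset V}
    {x y : V} (hy : y ∉ U) (hyx : k y < k x) :
    lexKey k U < lexKey k (insert y (U.erase x)) := by
  simp only [lexKey, Finset.Colex.toColex_lt_toColex_iff_exists_forall_lt, Finset.mem_image,
    Function.comp_apply]
  refine ⟨_, ⟨y, Finset.mem_insert_self y _, rfl⟩, fun ⟨z, hz, hzy⟩ => hy ?_, ?_⟩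
  · rwa [← hk (toDual.injective hzy)]
  · rintro _ ⟨z, hz, rfl⟩ hzW
    have hzx : z = x := by
      by_contra hzx
      exact hzW ⟨z, Finset.mem_insert_of_mem (Finset.mem_erase.2 ⟨hzx, hz⟩), rfl⟩
    rwa [hzx, toDual_lt_toDual]

theorem hasLinearQuotients_of_lexExchange [DecidableEq V] {K : Type} [Field K]
    (hk : Function.Injective k) {E : Set (Finset V)} (hfin : E.Finite)
    (hanti : IsAntichain (· ⊆ ·) E)
    (hex : ∀ U ∈ E, ∀ U' ∈ E, ∀ p ∈ U', p ∉ U → (∀ w, k w < k p → (w ∈ U ↔ w ∈ U')) →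
      LexExchange k E U U') :
    HasLinearQuotients (Ideal.span ((fun U => monomial (sqfreeExp U) (1 : K)) '' E)) := by
  refine hasLinearQuotients_of_exchange _ (lexKey_injective hk) hfin hanti
    fun U hU U' hU' hlt => ?_
  obtain ⟨p, hpU', hpU, hagree⟩ := exists_first_diff_of_lexKey_lt hk hlt
  obtain ⟨x, -, y, hyU', hyU, hyx, hW⟩ := hex U hU U' hU' p hpU' hpU hagree
  refine ⟨_, hW, lexKey_lt_insert_erase hk hyU hyx, y, hyU', ?_⟩
  rw [Finset.insert_sdiff_of_notMem _ hyU, Finset.sdiff_eq_empty_iff_subset.2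
    (Finset.erase_subset x U), insert_empty_eq]

end LexOrder

section Counting

variable {V : Type} [DecidableEq V] {M : Finset (Finset V)} {t : ℕ} {P : V → Prop}
  [DecidablePred P]

lemma dvd_card_filter_biUnion (hM : (M : Set (Finset V)).PairwiseDisjoint id)
    (hcard : ∀ F ∈ M, F.card = t) (hP : ∀ F ∈ M, (∀ v ∈ F, P v) ∨ ∀ v ∈ F, ¬P v) :
    t ∣ ((M.biUnion id).filter P).card := by
  rw [Finset.filter_biUnion,
    Finset.card_biUnion (hM.mono_on fun F _ => Finset.filter_subset P (id F))]
  refine Finset.dvd_sum fun F hF => ?_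
  rcases hP F hF with h | h
  · rw [id, Finset.filter_true_of_mem h, hcard F hF]
  · rw [id, Finset.filter_false_of_mem h, Finset.card_empty]
    exact dvd_zero t

lemma card_filter_biUnion_modEq (hM : (M : Set (Finset V)).PairwiseDisjoint id)
    (hcard : ∀ F ∈ M, F.card = t) {F₀ : Finset V} (hF₀ : F₀ ∈ M)
    (hP : ∀ F ∈ M, F ≠ F₀ → (∀ v ∈ F, P v) ∨ ∀ v ∈ F, ¬P v) :
    ((M.biUnion id).filter P).card ≡ (F₀.filter P).card [MOD t] := by
  have hrest : t ∣ (((M.erase F₀).biUnion id).filter P).card :=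
    dvd_card_filter_biUnion (hM.subset (Finset.coe_subset.2 (Finset.erase_subset F₀ M)))
      (fun F hF => hcard F (Finset.mem_of_mem_erase hF))
      (fun F hF => hP F (Finset.mem_of_mem_erase hF) (Finset.ne_of_mem_erase hF))
  have hdisj : Disjoint F₀ ((M.erase F₀).biUnion id) :=
    (Finset.disjoint_biUnion_right _ _ _).2 fun F hF =>
      hM hF₀ (Finset.mem_of_mem_erase hF) (Finset.ne_of_mem_erase hF).symm
  rw [← Finset.insert_erase hF₀, Finset.biUnion_insert, id, Finset.filter_union,
    Finset.card_union_of_disjoint (Finset.disjoint_filter_filter hdisj)]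
  simpa using (Nat.modEq_zero_iff_dvd.2 hrest).add_left (F₀.filter P).card

end Counting

lemma Finset.mem_biUnion_id {α : Type*} [DecidableEq α] {M : Finset (Finset α)} {v : α} :
    v ∈ M.biUnion id ↔ ∃ F ∈ M, v ∈ F :=
  Finset.mem_biUnion

lemma facets_ofFacets {V : Type} [DecidableEq V] {ℱ : Finset (Finset V)} (hne : ℱ.Nonempty)
    (hanti : IsAntichain (· ⊆ ·) (ℱ : Set (Finset V))) : (ofFacets ℱ).facets = ℱ := by
  have hfaces : ∀ G, G ∈ (ofFacets ℱ).faces ↔ ∃ A ∈ ℱ, G ⊆ A := by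
    intro G
    simp only [ofFacets, Finset.mem_insert, Finset.mem_biUnion, Finset.mem_powerset]
    refine ⟨?_, Or.inr⟩
    rintro (rfl | h)
    · exact hne.imp fun A hA => ⟨hA, Finset.empty_subset A⟩
    · exact h
  ext F
  simp only [SimplicialComplex.facets, Finset.mem_filter, hfaces]
  constructor
  · rintro ⟨⟨A, hA, hFA⟩, hmax⟩
    exact hmax A ⟨A, hA, subset_rfl⟩ hFA ▸ hA
  · intro hF
    refine ⟨⟨F, hF, subset_rfl⟩, fun G ⟨A, hA, hGA⟩ hFG => ?_⟩
    exact hFG.antisymm (hanti.eq hF hA (hFG.trans hGA) ▸ hGA)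

namespace SimplicialComplex

variable {V : Type} [DecidableEq V] {Δ : SimplicialComplex V} {M : Finset (Finset V)}
  {F G : Finset V}

def matchingVertexSets (Δ : SimplicialComplex V) (k : ℕ) : Set (Finset V) :=
  {U | ∃ M, Δ.IsMatching M ∧ M.card = k ∧ M.biUnion id = U}

lemma IsMatching.disjoint (hM : Δ.IsMatching M) (hF : F ∈ M) (hG : G ∈ M) (hne : F ≠ G) :
    Disjoint F G :=
  Finset.disjoint_iff_inter_eq_empty.2 (hM.2 F hF G hG hne)

lemma IsMatching.pairwiseDisjoint (hM : Δ.IsMatching M) :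
    (M : Set (Finset V)).PairwiseDisjoint id :=
  fun _ hF _ hG hne => hM.disjoint hF hG hne

lemma IsMatching.eq_of_mem_of_mem (hM : Δ.IsMatching M) (hF : F ∈ M) (hG : G ∈ M) {v : V}
    (hvF : v ∈ F) (hvG : v ∈ G) : F = G := by
  by_contra hne
  exact Finset.disjoint_left.1 (hM.disjoint hF hG hne) hvF hvG

lemma IsMatching.erase (hM : Δ.IsMatching M) (F : Finset V) : Δ.IsMatching (M.erase F) :=
  ⟨(Finset.erase_subset F M).trans hM.1, fun A hA B hB =>
    hM.2 A (Finset.mem_of_mem_erase hA) B (Finset.mem_of_mem_erase hB)⟩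

lemma IsMatching.insert_of_disjoint (hM : Δ.IsMatching M) (hF : F ∈ Δ.facets)
    (hdisj : Disjoint F (M.biUnion id)) : Δ.IsMatching (insert F M) := by
  have hdisj' : ∀ A ∈ M, F ∩ A = ∅ := fun A hA =>
    Finset.disjoint_iff_inter_eq_empty.1 ((Finset.disjoint_biUnion_right _ _ _).1 hdisj A hA)
  refine ⟨Finset.insert_subset hF hM.1, fun A hA B hB hne => ?_⟩
  rcases Finset.mem_insert.1 hA with rfl | hAM <;> rcases Finset.mem_insert.1 hB with rfl | hBM
  · exact absurd rfl hne
  · exact hdisj' B hBM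
  · rw [Finset.inter_comm]; exact hdisj' A hAM
  · exact hM.2 A hAM B hBM hne

lemma card_le_matchingNumber (hM : Δ.IsMatching M) : M.card ≤ Δ.matchingNumber :=
  le_csSup ⟨Δ.facets.card, by rintro _ ⟨N, hN, rfl⟩; exact Finset.card_le_card hN.1⟩ ⟨M, hM, rfl⟩

lemma IsMatching.swap (hM : Δ.IsMatching M) {K : Finset V} (hK : K ∈ M) {x y : V} (hx : x ∈ K)
    (hy : y ∉ M.biUnion id) (hK' : insert y (K.erase x) ∈ Δ.facets) :
    insert y ((M.biUnion id).erase x) ∈ Δ.matchingVertexSets M.card := by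
  have hyK' : y ∈ insert y (K.erase x) := Finset.mem_insert_self y _
  have hK'M : insert y (K.erase x) ∉ M.erase K := fun h =>
    hy (Finset.mem_biUnion_id.2 ⟨_, Finset.mem_of_mem_erase h, hyK'⟩)
  have hxM : x ∉ (M.erase K).biUnion id := by
    simp only [Finset.mem_biUnion, not_exists, not_and]
    intro F hF hxF
    exact Finset.ne_of_mem_erase hF (hM.eq_of_mem_of_mem (Finset.mem_of_mem_erase hF) hK hxF hx)
  refine ⟨insert (insert y (K.erase x)) (M.erase K), (hM.erase K).insert_of_disjoint hK' ?_, ?_, ?_⟩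
  · refine Finset.disjoint_insert_left.2 ⟨fun h => hy ?_, ?_⟩
    · exact Finset.biUnion_subset_biUnion_of_subset_left _ (Finset.erase_subset K M) h
    · exact (Finset.disjoint_biUnion_right _ _ _).2 fun F hF =>
        (hM.disjoint hK (Finset.mem_of_mem_erase hF) (Finset.ne_of_mem_erase hF).symm).mono_left
          (Finset.erase_subset x K)
  · rw [Finset.card_insert_of_notMem hK'M, Finset.card_erase_add_one hK]
  · conv_rhs => rw [← Finset.insert_erase hK]
    rw [Finset.biUnion_insert, Finset.biUnion_insert, id, id, Finset.insert_union,
      Finset.erase_union_distrib, Finset.erase_eq_of_notMem hxM]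

lemma matchingVertexSets_finite (k : ℕ) : (Δ.matchingVertexSets k).Finite := by
  refine ((Δ.facets.powerset : Set (Finset (Finset V))).toFinite.image (·.biUnion id)).subset ?_
  rintro _ ⟨M, hM, -, rfl⟩
  exact ⟨M, Finset.mem_coe.2 (Finset.mem_powerset.2 hM.1), rfl⟩

lemma sized_matchingVertexSets {t : ℕ} (hcard : ∀ F ∈ Δ.facets, F.card = t) (k : ℕ) :
    (Δ.matchingVertexSets k).Sized (t * k) := by
  rintro _ ⟨M, hM, rfl, rfl⟩
  rw [Finset.card_biUnion hM.pairwiseDisjoint]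
  exact (Finset.sum_const_nat fun F hF => hcard F (hM.1 hF)).trans (mul_comm _ _)

end SimplicialComplex

lemma sqfreePower_eq_span (K : Type) [Field K] {V : Type} [DecidableEq V]
    (Δ : SimplicialComplex V) (k : ℕ) :
    sqfreePower K Δ k =
      Ideal.span ((fun U => monomial (sqfreeExp U) (1 : K)) '' Δ.matchingVertexSets k) := by
  unfold sqfreePower matchPow
  congr 1
  have hprod : ∀ M, Δ.IsMatching M →
      ∏ F ∈ M, ∏ v ∈ F, (X v : MvPolynomial V K) = monomial (sqfreeExp (M.biUnion id)) 1 :=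
    fun M hM => by rw [← prod_X_eq_monomial_sqfreeExp, Finset.prod_biUnion hM.pairwiseDisjoint]; rfl
  ext p
  constructor
  · rintro ⟨M, hMf, hMd, hMk, rfl⟩
    exact ⟨_, ⟨M, ⟨hMf, hMd⟩, hMk, rfl⟩, (hprod M ⟨hMf, hMd⟩).symm⟩
  · rintro ⟨_, ⟨M, hM, hMk, rfl⟩, rfl⟩
    exact ⟨M, hM.1, hM.2, hMk, (hprod M hM).symm⟩

namespace Broom

def handleFacet (t i : ℕ) : Finset BroomVertex := (Finset.Icc i (i + t - 1)).image Sum.inl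

def leafFacet (t j a : ℕ) : Finset BroomVertex :=
  insert (Sum.inr (j, a)) ((Finset.Icc (j - (t - 2)) j).image Sum.inl)

def pos : BroomVertex → ℕ := Sum.elim id Prod.fst

def vertexKey : BroomVertex → ℕ ×ₗ WithBot ℕ
  | .inl i => toLex (i, ⊥)
  | .inr (j, a) => toLex (j, a)

@[simp] lemma pos_inl (i : ℕ) : pos (.inl i) = i := rfl

@[simp] lemma pos_inr (j a : ℕ) : pos (.inr (j, a)) = j := rfl

@[simp] lemma inl_mem_handleFacet {t i x : ℕ} :
    .inl x ∈ handleFacet t i ↔ i ≤ x ∧ x ≤ i + t - 1 := by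
  simp [handleFacet]

@[simp] lemma inr_notMem_handleFacet {t i : ℕ} {p : ℕ × ℕ} : .inr p ∉ handleFacet t i := by
  simp [handleFacet]

@[simp] lemma inl_mem_leafFacet {t j a x : ℕ} :
    .inl x ∈ leafFacet t j a ↔ j - (t - 2) ≤ x ∧ x ≤ j := by
  simp [leafFacet]

@[simp] lemma inr_mem_leafFacet {t j a : ℕ} {p : ℕ × ℕ} :
    .inr p ∈ leafFacet t j a ↔ p = (j, a) := by
  simp [leafFacet]

lemma vertexKey_injective : Function.Injective vertexKey := by
  rintro (i | ⟨j, a⟩) (i' | ⟨j', a'⟩) h <;> simp_all [vertexKey]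

lemma vertexKey_lt_of_pos_lt {v w : BroomVertex} (h : pos v < pos w) :
    vertexKey v < vertexKey w := by
  rcases v with i | ⟨j, a⟩ <;> rcases w with i' | ⟨j', a'⟩ <;>
    simp_all [vertexKey, Prod.Lex.toLex_lt_toLex]

lemma vertexKey_inl_lt_inr {i j a : ℕ} (h : i ≤ j) :
    vertexKey (.inl i) < vertexKey (.inr (j, a)) := by
  simp [vertexKey, Prod.Lex.toLex_lt_toLex, h.lt_or_eq]

lemma vertexKey_lt_inr_of_pos_le {v : BroomVertex} {j : ℕ} (hv : pos v ≤ j)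
    (hleaf : ∀ c, v ≠ .inr (j, c)) (a : ℕ) : vertexKey v < vertexKey (.inr (j, a)) := by
  rcases v with i | ⟨z, c⟩
  · exact vertexKey_inl_lt_inr hv
  · have : z ≠ j := fun hz => hleaf c (hz ▸ rfl)
    exact vertexKey_lt_of_pos_lt (by simp at hv ⊢; omega)

lemma vertexKey_inr_lt_inr {j a b : ℕ} (h : b < a) :
    vertexKey (.inr (j, b)) < vertexKey (.inr (j, a)) := by
  simp [vertexKey, Prod.Lex.toLex_lt_toLex, h]

variable {h t : ℕ} {ℓ : ℕ → ℕ} {F : Finset BroomVertex}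

lemma mem_broomFacets : F ∈ broomFacets h t ℓ ↔ (∃ i < h + 2 - t, F = handleFacet t i) ∨
    ∃ j a, t - 2 ≤ j ∧ j < h ∧ a < ℓ j ∧ F = leafFacet t j a := by
  simp only [broomFacets, Finset.mem_union, Finset.mem_image, Finset.mem_range,
    Finset.mem_biUnion]
  refine or_congr ⟨fun ⟨i, hi, hF⟩ => ⟨i, hi, hF.symm⟩, fun ⟨i, hi, hF⟩ => ⟨i, hi, hF.symm⟩⟩ ?_
  constructor
  · rintro ⟨j, hj, hF⟩
    split_ifs at hF with hjt
    · obtain ⟨a, ha, rfl⟩ := Finset.mem_image.1 hF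
      exact ⟨j, a, hjt, hj, Finset.mem_range.1 ha, rfl⟩
    · exact absurd hF (Finset.notMem_empty F)
  · rintro ⟨j, a, hjt, hj, ha, rfl⟩
    exact ⟨j, hj, by rw [if_pos hjt]; exact Finset.mem_image.2 ⟨a, Finset.mem_range.2 ha, rfl⟩⟩

lemma card_of_mem_broomFacets (ht : 2 ≤ t) (hF : F ∈ broomFacets h t ℓ) : F.card = t := by
  rcases mem_broomFacets.1 hF with ⟨i, -, rfl⟩ | ⟨j, a, hj, -, -, rfl⟩
  · rw [handleFacet, Finset.card_image_of_injective _ Sum.inl_injective, Nat.card_Icc]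
    omega
  · rw [leafFacet, Finset.card_insert_of_notMem (by simp),
      Finset.card_image_of_injective _ Sum.inl_injective, Nat.card_Icc]
    omega

lemma pos_lt_or_gt_of_inl_notMem (hF : F ∈ broomFacets h t ℓ) {q : ℕ} (hq : .inl q ∉ F) :
    (∀ v ∈ F, pos v < q) ∨ ∀ v ∈ F, q < pos v := by
  rcases mem_broomFacets.1 hF with ⟨i, -, rfl⟩ | ⟨j, a, -, -, -, rfl⟩
  · simp only [inl_mem_handleFacet, not_and_or, not_le] at hq
    rcases hq with hq | hq
    · right; rintro (x | ⟨z, b⟩) hv <;> simp_all; omega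
    · left; rintro (x | ⟨z, b⟩) hv <;> simp_all; omega
  · simp only [inl_mem_leafFacet, not_and_or, not_le] at hq
    rcases hq with hq | hq
    · right; rintro (x | ⟨z, b⟩) hv <;> simp at hv ⊢ <;> omega
    · left; rintro (x | ⟨z, b⟩) hv <;> simp at hv ⊢ <;> omega

lemma eq_leafFacet_of_inr_mem (hF : F ∈ broomFacets h t ℓ) {j b : ℕ} (hjb : .inr (j, b) ∈ F) :
    F = leafFacet t j b := by
  rcases mem_broomFacets.1 hF with ⟨i, -, rfl⟩ | ⟨j', a, -, -, -, rfl⟩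
  · simp at hjb
  · simp only [inr_mem_leafFacet, Prod.mk.injEq] at hjb
    rw [hjb.1, hjb.2]

lemma inl_mem_leafFacet_self (t j a : ℕ) : .inl j ∈ leafFacet t j a := by simp

lemma insert_erase_leafFacet (t j a b : ℕ) :
    insert (.inr (j, a)) ((leafFacet t j b).erase (.inr (j, b))) = leafFacet t j a := by
  rw [leafFacet, Finset.erase_insert (by simp), leafFacet]

lemma handleFacet_mem_of_forall_le (ht : 2 ≤ t) (hF : F ∈ broomFacets h t ℓ) {q : ℕ}
    (hq : .inl q ∈ F) (hle : ∀ v ∈ F, q ≤ pos v) :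
    handleFacet t q ∈ broomFacets h t ℓ ∧ ∀ x, q ≤ x → x + 2 ≤ q + t → .inl x ∈ F := by
  rcases mem_broomFacets.1 hF with ⟨i, hi, rfl⟩ | ⟨j, a, hj, hjh, -, rfl⟩
  · have := hle (.inl i) (by simp; omega)
    simp only [inl_mem_handleFacet, pos_inl] at hq this
    obtain rfl : i = q := by omega
    exact ⟨hF, fun x hx1 hx2 => by simp; omega⟩
  · have := hle (.inl (j - (t - 2))) (by simp)
    simp only [inl_mem_leafFacet, pos_inl] at hq this
    exact ⟨mem_broomFacets.2 (Or.inl ⟨q, by omega, rfl⟩), fun x hx1 hx2 => by simp; omega⟩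

lemma exists_shift_down (ht : 2 ≤ t) (hF : F ∈ broomFacets h t ℓ) {s : ℕ}
    (hs : .inl (s + 1) ∈ F) (hs' : .inl s ∉ F) :
    ∃ x ∈ F, s < pos x ∧ insert (.inl s) (F.erase x) ∈ broomFacets h t ℓ := by
  rcases mem_broomFacets.1 hF with ⟨i, hi, rfl⟩ | ⟨j, a, hj, hjh, -, rfl⟩
  · simp only [inl_mem_handleFacet] at hs hs'
    obtain rfl : i = s + 1 := by omega
    refine ⟨.inl (s + t), by simp; omega, by simp; omega, ?_⟩
    have heq : insert (.inl s) ((handleFacet t (s + 1)).erase (.inl (s + t))) =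
        handleFacet t s := by
      ext (x | p) <;> simp; omega
    rw [heq]
    exact mem_broomFacets.2 (Or.inl ⟨s, by omega, rfl⟩)
  · simp only [inl_mem_leafFacet] at hs hs'
    obtain rfl : j = s + t - 1 := by omega
    refine ⟨.inr (s + t - 1, a), by simp, by simp; omega, ?_⟩
    have heq : insert (.inl s) ((leafFacet t (s + t - 1) a).erase (.inr (s + t - 1, a))) =
        handleFacet t s := by
      ext (x | p) <;> simp [leafFacet]; omega
    rw [heq]
    exact mem_broomFacets.2 (Or.inl ⟨s, by omega, rfl⟩)

lemma inl_succ_mem_of_dvd_card_filter (ht : 2 ≤ t) (hF : F ∈ broomFacets h t ℓ) {j : ℕ}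
    (hj : .inl j ∈ F) (hleaf : ∀ b, .inr (j, b) ∉ F)
    (hdvd : t ∣ (F.filter (pos · ≤ j)).card + 1) :
    .inl (j + 1) ∈ F ∧ ∀ a, insert (.inr (j, a)) (F.erase (.inl (j + 1))) = leafFacet t j a := by
  rcases mem_broomFacets.1 hF with ⟨i, -, rfl⟩ | ⟨j₂, b, -, -, -, rfl⟩
  · simp only [inl_mem_handleFacet] at hj
    have hfilter : (handleFacet t i).filter (pos · ≤ j) = (Finset.Icc i j).image Sum.inl := by
      ext (x | p) <;> simp; omega
    rw [hfilter, Finset.card_image_of_injective _ Sum.inl_injective, Nat.card_Icc] at hdvd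
    have := Nat.eq_of_dvd_of_lt_two_mul (by omega) hdvd (by omega)
    refine ⟨by simp; omega, fun a => ?_⟩
    ext (x | ⟨z, c⟩) <;> simp [leafFacet]; omega
  · have hj₂ : j ≠ j₂ := fun h => hleaf b (by simp [h])
    simp only [inl_mem_leafFacet] at hj
    have hfilter : (leafFacet t j₂ b).filter (pos · ≤ j) =
        (Finset.Icc (j₂ - (t - 2)) j).image Sum.inl := by
      ext (x | ⟨z, c⟩) <;> simp <;> omega
    rw [hfilter, Finset.card_image_of_injective _ Sum.inl_injective, Nat.card_Icc] at hdvd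
    exact absurd (Nat.le_of_dvd (by omega) hdvd) (by omega)

open SimplicialComplex

variable {Δ : SimplicialComplex BroomVertex} {M M' : Finset (Finset BroomVertex)}

lemma card_of_mem_facets (ht : 2 ≤ t) (hΔ : Δ.facets = broomFacets h t ℓ) :
    ∀ F ∈ Δ.facets, F.card = t :=
  fun _ hF => card_of_mem_broomFacets ht (hΔ ▸ hF)

lemma forall_le_pos_of_first_diff_inl (ht : 2 ≤ t) (hΔ : Δ.facets = broomFacets h t ℓ)
    (hM : Δ.IsMatching M) (hM' : Δ.IsMatching M') {F' : Finset BroomVertex} (hF' : F' ∈ M')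
    {q : ℕ} (hqF' : .inl q ∈ F') (hq : .inl q ∉ M.biUnion id)
    (hagree : ∀ w, vertexKey w < vertexKey (.inl q) → (w ∈ M.biUnion id ↔ w ∈ M'.biUnion id)) :
    ∀ v ∈ F', q ≤ pos v := by
  have hsplit : ∀ N, Δ.IsMatching N → ∀ F ∈ N, .inl q ∉ F →
      (∀ v ∈ F, pos v < q) ∨ ∀ v ∈ F, ¬pos v < q := fun N hN F hF hqF =>
    (pos_lt_or_gt_of_inl_notMem (hΔ ▸ hN.1 hF) hqF).imp_right fun h v hv => (h v hv).asymm
  have hU : t ∣ ((M.biUnion id).filter (pos · < q)).card :=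
    dvd_card_filter_biUnion hM.pairwiseDisjoint (fun F hF => card_of_mem_facets ht hΔ F (hM.1 hF))
      fun F hF => hsplit M hM F hF fun hqF => hq (Finset.mem_biUnion_id.2 ⟨F, hF, hqF⟩)
  have hU' := card_filter_biUnion_modEq (P := (pos · < q)) hM'.pairwiseDisjoint
    (fun F hF => card_of_mem_facets ht hΔ F (hM'.1 hF)) hF'
    fun F hF hne => hsplit M' hM' F hF fun hqF => hne (hM'.eq_of_mem_of_mem hF hF' hqF hqF')
  have hUU' : (M.biUnion id).filter (pos · < q) = (M'.biUnion id).filter (pos · < q) := by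
    ext v
    simp only [Finset.mem_filter]
    exact and_congr_left fun hv => hagree v (vertexKey_lt_of_pos_lt hv)
  rw [← hUU'] at hU'
  have hdvd : t ∣ (F'.filter (pos · < q)).card :=
    Nat.modEq_zero_iff_dvd.1 (hU'.symm.trans (Nat.modEq_zero_iff_dvd.2 hU))
  have hlt : (F'.filter (pos · < q)).card < t := by
    rw [← card_of_mem_facets ht hΔ F' (hM'.1 hF')]
    exact Finset.card_lt_card (Finset.filter_ssubset.2 ⟨_, hqF', lt_irrefl q⟩)
  intro v hv
  by_contra! hvq
  exact Finset.card_ne_zero.2 ⟨v, Finset.mem_filter.2 ⟨hv, hvq⟩⟩ (Nat.eq_zero_of_dvd_of_lt hdvd hlt)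

lemma lexExchange_of_first_diff_inl (ht : 2 ≤ t) (hΔ : Δ.facets = broomFacets h t ℓ)
    (hM : Δ.IsMatching M) (hMν : M.card = Δ.matchingNumber) (hM' : Δ.IsMatching M') {q : ℕ}
    (hq' : .inl q ∈ M'.biUnion id) (hq : .inl q ∉ M.biUnion id)
    (hagree : ∀ w, vertexKey w < vertexKey (.inl q) → (w ∈ M.biUnion id ↔ w ∈ M'.biUnion id)) :
    LexExchange vertexKey (Δ.matchingVertexSets Δ.matchingNumber) (M.biUnion id)
      (M'.biUnion id) := by
  obtain ⟨F', hF', hqF'⟩ := Finset.mem_biUnion_id.1 hq'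
  obtain ⟨hHq, hF'covers⟩ := handleFacet_mem_of_forall_le ht (hΔ ▸ hM'.1 hF') hqF'
    (forall_le_pos_of_first_diff_inl ht hΔ hM hM' hF' hqF' hq hagree)
  set S := (Finset.Icc q (q + t - 1)).filter (fun x => .inl x ∈ M.biUnion id)
  rcases S.eq_empty_or_nonempty with hS | hS
  · have hdisj : Disjoint (handleFacet t q) (M.biUnion id) := by
      refine Finset.disjoint_left.2 fun v hv hvM => ?_
      obtain ⟨x, hx, rfl⟩ := Finset.mem_image.1 hv
      exact Finset.notMem_empty x (hS ▸ Finset.mem_filter.2 ⟨hx, hvM⟩)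
    have hHqM : handleFacet t q ∉ M := fun h =>
      hq (Finset.mem_biUnion_id.2 ⟨_, h, by simp; omega⟩)
    have := card_le_matchingNumber (hM.insert_of_disjoint (hΔ ▸ hHq) hdisj)
    rw [Finset.card_insert_of_notMem hHqM] at this
    omega
  obtain ⟨s₁, hs₁S, hs₁min⟩ : ∃ s₁ ∈ S, ∀ x ∈ S, s₁ ≤ x :=
    ⟨S.min' hS, S.min'_mem hS, fun x hx => S.min'_le x hx⟩
  obtain ⟨hs₁, hs₁M⟩ := Finset.mem_filter.1 hs₁S
  rw [Finset.mem_Icc] at hs₁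
  have hs₁q : s₁ ≠ q := fun h => hq (h ▸ hs₁M)
  obtain ⟨s, rfl⟩ : ∃ s, s₁ = s + 1 := ⟨s₁ - 1, by omega⟩
  have hsM : .inl s ∉ M.biUnion id := fun h =>
    (hs₁min s (Finset.mem_filter.2 ⟨Finset.mem_Icc.2 ⟨by omega, by omega⟩, h⟩)).not_gt
      (Nat.lt_succ_self s)
  obtain ⟨K, hK, hsK⟩ := Finset.mem_biUnion_id.1 hs₁M
  obtain ⟨x, hxK, hsx, hK'⟩ := exists_shift_down ht (hΔ ▸ hM.1 hK) hsK
    fun h => hsM (Finset.mem_biUnion_id.2 ⟨K, hK, h⟩)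
  refine ⟨x, Finset.mem_biUnion_id.2 ⟨K, hK, hxK⟩, .inl s,
    Finset.mem_biUnion_id.2 ⟨F', hF', hF'covers s (by omega) (by omega)⟩, hsM,
    vertexKey_lt_of_pos_lt hsx, ?_⟩
  exact hMν ▸ hM.swap hK hxK hsM (hΔ ▸ hK')

lemma eq_of_inr_mem_biUnion (hΔ : Δ.facets = broomFacets h t ℓ) (hM : Δ.IsMatching M)
    {j a b : ℕ} (ha : .inr (j, a) ∈ M.biUnion id) (hb : .inr (j, b) ∈ M.biUnion id) : a = b := by
  obtain ⟨F, hF, haF⟩ := Finset.mem_biUnion_id.1 ha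
  obtain ⟨G, hG, hbG⟩ := Finset.mem_biUnion_id.1 hb
  have hFa := eq_leafFacet_of_inr_mem (hΔ ▸ hM.1 hF) haF
  have hGb := eq_leafFacet_of_inr_mem (hΔ ▸ hM.1 hG) hbG
  have hFG := hM.eq_of_mem_of_mem hF hG (hFa ▸ inl_mem_leafFacet_self t j a)
    (hGb ▸ inl_mem_leafFacet_self t j b)
  rw [hFG, hGb, inr_mem_leafFacet] at haF
  exact (Prod.mk.inj haF).2

lemma lexExchange_of_first_diff_inr_of_inr_mem (hΔ : Δ.facets = broomFacets h t ℓ)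
    (hM : Δ.IsMatching M) (hMν : M.card = Δ.matchingNumber) (hM' : Δ.IsMatching M')
    {j a b : ℕ} (hp' : .inr (j, a) ∈ M'.biUnion id) (hp : .inr (j, a) ∉ M.biUnion id)
    (hagree : ∀ w, vertexKey w < vertexKey (.inr (j, a)) →
      (w ∈ M.biUnion id ↔ w ∈ M'.biUnion id))
    (hb : .inr (j, b) ∈ M.biUnion id) :
    LexExchange vertexKey (Δ.matchingVertexSets Δ.matchingNumber) (M.biUnion id)
      (M'.biUnion id) := by
  obtain ⟨F', hF', hpF'⟩ := Finset.mem_biUnion_id.1 hp'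
  obtain ⟨G, hG, hbG⟩ := Finset.mem_biUnion_id.1 hb
  have hab : a < b := by
    rcases lt_trichotomy a b with hab | rfl | hba
    · exact hab
    · exact absurd hb hp
    · have hb' := (hagree _ (vertexKey_inr_lt_inr hba)).1 hb
      exact absurd (eq_of_inr_mem_biUnion hΔ hM' hb' hp') hba.ne
  have hG' : insert (.inr (j, a)) (G.erase (.inr (j, b))) ∈ Δ.facets := by
    rw [eq_leafFacet_of_inr_mem (hΔ ▸ hM.1 hG) hbG, insert_erase_leafFacet,
      ← eq_leafFacet_of_inr_mem (hΔ ▸ hM'.1 hF') hpF']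
    exact hM'.1 hF'
  exact ⟨_, hb, _, hp', hp, vertexKey_inr_lt_inr hab, hMν ▸ hM.swap hG hbG hp hG'⟩

lemma dvd_card_filter_add_one_of_first_diff_inr (ht : 2 ≤ t)
    (hΔ : Δ.facets = broomFacets h t ℓ) (hM : Δ.IsMatching M) (hM' : Δ.IsMatching M')
    {j a : ℕ} (hp' : .inr (j, a) ∈ M'.biUnion id) (hp : .inr (j, a) ∉ M.biUnion id)
    (hagree : ∀ w, vertexKey w < vertexKey (.inr (j, a)) →
      (w ∈ M.biUnion id ↔ w ∈ M'.biUnion id))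
    (hleaf : ∀ b, .inr (j, b) ∉ M.biUnion id) {G : Finset BroomVertex} (hG : G ∈ M)
    (hjG : .inl j ∈ G) :
    t ∣ (G.filter (pos · ≤ j)).card + 1 := by
  obtain ⟨F', hF', hpF'⟩ := Finset.mem_biUnion_id.1 hp'
  have hF'eq := eq_leafFacet_of_inr_mem (hΔ ▸ hM'.1 hF') hpF'
  have hjF' : .inl j ∈ F' := hF'eq ▸ inl_mem_leafFacet_self t j a
  have hsplit : ∀ N, Δ.IsMatching N → ∀ F ∈ N, .inl j ∉ F →
      (∀ v ∈ F, pos v ≤ j) ∨ ∀ v ∈ F, ¬pos v ≤ j := fun N hN F hF hjF =>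
    (pos_lt_or_gt_of_inl_notMem (hΔ ▸ hN.1 hF) hjF).imp (fun h v hv => (h v hv).le)
      fun h v hv => (h v hv).not_ge
  have hU' : t ∣ ((M'.biUnion id).filter (pos · ≤ j)).card := by
    refine dvd_card_filter_biUnion hM'.pairwiseDisjoint
      (fun F hF => card_of_mem_facets ht hΔ F (hM'.1 hF)) fun F hF => ?_
    by_cases hFF' : F = F'
    · left
      rw [hFF', hF'eq]
      rintro (x | ⟨z, c⟩) hv <;> simp at hv ⊢ <;> omega
    · exact hsplit M' hM' F hF fun hjF => hFF' (hM'.eq_of_mem_of_mem hF hF' hjF hjF')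
  have hU := card_filter_biUnion_modEq (P := (pos · ≤ j)) hM.pairwiseDisjoint
    (fun F hF => card_of_mem_facets ht hΔ F (hM.1 hF)) hG
    fun F hF hne => hsplit M hM F hF fun hjF => hne (hM.eq_of_mem_of_mem hF hG hjF hjG)
  have hUU' : (M'.biUnion id).filter (pos · ≤ j) =
      insert (.inr (j, a)) ((M.biUnion id).filter (pos · ≤ j)) := by
    ext v
    simp only [Finset.mem_filter, Finset.mem_insert]
    by_cases hv : ∃ c, v = .inr (j, c)
    · obtain ⟨c, rfl⟩ := hv
      simp only [hleaf, pos_inr, le_rfl, and_true, or_false, Sum.inr.injEq,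
        Prod.mk.injEq, true_and]
      exact ⟨fun hc => eq_of_inr_mem_biUnion hΔ hM' hc hp', fun hc => hc ▸ hp'⟩
    · rw [not_exists] at hv
      simp only [hv a, false_or]
      exact and_congr_left fun hvj => (hagree v (vertexKey_lt_inr_of_pos_le hvj hv a)).symm
  rw [hUU', Finset.card_insert_of_notMem fun h => hp (Finset.mem_of_mem_filter _ h)] at hU'
  exact Nat.modEq_zero_iff_dvd.1 ((hU.add_right 1).symm.trans (Nat.modEq_zero_iff_dvd.2 hU'))

lemma lexExchange_of_first_diff_inr_of_forall_inr_notMem (ht : 2 ≤ t)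
    (hΔ : Δ.facets = broomFacets h t ℓ) (hM : Δ.IsMatching M)
    (hMν : M.card = Δ.matchingNumber) (hM' : Δ.IsMatching M') {j a : ℕ}
    (hp' : .inr (j, a) ∈ M'.biUnion id) (hp : .inr (j, a) ∉ M.biUnion id)
    (hagree : ∀ w, vertexKey w < vertexKey (.inr (j, a)) →
      (w ∈ M.biUnion id ↔ w ∈ M'.biUnion id))
    (hleaf : ∀ b, .inr (j, b) ∉ M.biUnion id) :
    LexExchange vertexKey (Δ.matchingVertexSets Δ.matchingNumber) (M.biUnion id)
      (M'.biUnion id) := by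
  obtain ⟨F', hF', hpF'⟩ := Finset.mem_biUnion_id.1 hp'
  have hF'eq := eq_leafFacet_of_inr_mem (hΔ ▸ hM'.1 hF') hpF'
  obtain ⟨G, hG, hjG⟩ := Finset.mem_biUnion_id.1 ((hagree _ (vertexKey_inl_lt_inr le_rfl)).2
    (Finset.mem_biUnion_id.2 ⟨F', hF', hF'eq ▸ inl_mem_leafFacet_self t j a⟩))
  obtain ⟨hxG, hG'⟩ := inl_succ_mem_of_dvd_card_filter ht (hΔ ▸ hM.1 hG) hjG
    (fun b hb => hleaf b (Finset.mem_biUnion_id.2 ⟨G, hG, hb⟩))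
    (dvd_card_filter_add_one_of_first_diff_inr ht hΔ hM hM' hp' hp hagree hleaf hG hjG)
  refine ⟨_, Finset.mem_biUnion_id.2 ⟨G, hG, hxG⟩, _, hp', hp,
    vertexKey_lt_of_pos_lt (by simp), hMν ▸ hM.swap hG hxG hp ?_⟩
  rw [hG' a, ← hF'eq]
  exact hM'.1 hF'

theorem lexExchange (ht : 2 ≤ t) (hΔ : Δ.facets = broomFacets h t ℓ)
    {U U' : Finset BroomVertex} (hU : U ∈ Δ.matchingVertexSets Δ.matchingNumber)
    (hU' : U' ∈ Δ.matchingVertexSets Δ.matchingNumber) {p : BroomVertex} (hp' : p ∈ U')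
    (hp : p ∉ U) (hagree : ∀ w, vertexKey w < vertexKey p → (w ∈ U ↔ w ∈ U')) :
    LexExchange vertexKey (Δ.matchingVertexSets Δ.matchingNumber) U U' := by
  obtain ⟨M, hM, hMν, rfl⟩ := hU
  obtain ⟨M', hM', -, rfl⟩ := hU'
  rcases p with q | ⟨j, a⟩
  · exact lexExchange_of_first_diff_inl ht hΔ hM hMν hM' hp' hp hagree
  · by_cases hleaf : ∃ b, .inr (j, b) ∈ M.biUnion id
    · obtain ⟨b, hb⟩ := hleaf
      exact lexExchange_of_first_diff_inr_of_inr_mem hΔ hM hMν hM' hp' hp hagree hb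
    · exact lexExchange_of_first_diff_inr_of_forall_inr_notMem ht hΔ hM hMν hM' hp' hp hagree
        (not_exists.1 hleaf)

end Broom

/-- For the `t`-path simplicial tree `Γ_t` of a broom graph
containing a directed path on `t` vertices, the highest nonvanishing squarefree
power `I(Γ_t)^{[ν(Γ_t)]}` has linear quotients. -/
theorem broom_top_sqfreePower_hasLinearQuotients
    (K : Type) [Field K] (h t : ℕ) (ht : 2 ≤ t) (ℓ : ℕ → ℕ)
    (hpath : (broomFacets h t ℓ).Nonempty) :
    HasLinearQuotients
      (sqfreePower K (ofFacets (broomFacets h t ℓ))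
        (ofFacets (broomFacets h t ℓ)).matchingNumber) := by
  set Δ := ofFacets (broomFacets h t ℓ)
  have hsized : (broomFacets h t ℓ : Set (Finset BroomVertex)).Sized t :=
    fun _ hF => Broom.card_of_mem_broomFacets ht hF
  have hΔ : Δ.facets = broomFacets h t ℓ := facets_ofFacets hpath hsized.isAntichain
  rw [sqfreePower_eq_span]
  exact hasLinearQuotients_of_lexExchange Broom.vertexKey_injective
    (Δ.matchingVertexSets_finite _)
    (Δ.sized_matchingVertexSets (Broom.card_of_mem_facets ht hΔ) _).isAntichain
    fun _ hU _ hU' _ hp' hp hagree => Broom.lexExchange ht hΔ hU hU' hp' hp hagree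

end
end
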